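/- arXiv:1704.08592 — 2 statements merged into one kernel-verified Lean document; each statement's English description precedes it below -/
import Mathlib

section
/- For every s, v ∈ V with v ≠ s, the dependency after the update satisfies δ'_{s•}(v) = δ_{s•}(v) − Δ_{s•}(v) + Δ'_{s•}(v). -/
open scoped BigOperators

/-- A directed graph on vertex set `V` with positive real edge weights. -/
structure WDigraph (V : Type*) where
  /-- the edge relation -/
  E : V → V → Prop
  /-- the edge weights -/
  w : V → V → ℝ
  /-- weights of edges are positive -/
  pos : ∀ a b, E a b → 0 < w a b

namespace WDigraph

variable {V : Type*} [Fintype V] [DecidableEq V]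

/-- `p` is a simple path from `s` to `t` in `G`: a nonempty list of pairwise
distinct vertices starting at `s`, ending at `t`, consecutive vertices joined
by edges. (Since all weights are positive, every shortest path is simple, so
it suffices to consider simple paths throughout.) -/
def IsPath (G : WDigraph V) (s t : V) (p : List V) : Prop :=
  List.Chain' G.E p ∧ p.head? = some s ∧ p.getLast? = some t ∧ p.Nodup

/-- The total weight of a list of vertices (sum of the weights of consecutive pairs). -/
def pw (G : WDigraph V) : List V → ℝ
  | [] => 0
  | [_] => 0
  | a :: b :: r => G.w a b + G.pw (b :: r)

/-- `d(s,t)`: shortest-path distance from `s` to `t`, equal to `⊤` (infinity)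
if `t` is unreachable from `s`. -/
noncomputable def dist (G : WDigraph V) (s t : V) : EReal :=
  sInf ((fun p => (G.pw p : EReal)) '' {p | G.IsPath s t p})

/-- The set of shortest `s`-`t` paths in `G`. -/
def SP (G : WDigraph V) (s t : V) : Set (List V) :=
  {p | G.IsPath s t p ∧ (G.pw p : EReal) = G.dist s t}

/-- `σ_{st}`: the number of shortest `s`-`t` paths in `G`. -/
noncomputable def sigma (G : WDigraph V) (s t : V) : ℕ :=
  (G.SP s t).ncard

/-- `σ_{st}(v)`: the number of shortest `s`-`t` paths in `G` that contain `v`. -/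
noncomputable def sigmaV (G : WDigraph V) (s t v : V) : ℕ :=
  {p ∈ G.SP s t | v ∈ p}.ncard

/-- `σ_{st}(v,w)`: the number of shortest `s`-`t` paths in `G` using the edge `(v,w)`. -/
noncomputable def sigmaE (G : WDigraph V) (s t v w : V) : ℕ :=
  {p ∈ G.SP s t | [v, w] <:+: p}.ncard

/-- `P_s(t)`: the set of predecessors of `t` with respect to source `s`:
nodes `y` with `(y,t) ∈ E` and `d(s,y) + ω(y,t) = d(s,t) < ∞`. -/
def pred (G : WDigraph V) (s t : V) : Set V :=
  {y | G.E y t ∧ G.dist s y + (G.w y t : EReal) = G.dist s t ∧ G.dist s t < ⊤}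

/-- `δ_{s•}(v)`: Brandes's one-sided dependency of `s` on `v`
(a summand is `0` whenever its denominator is `0`, which is automatic since
in Lean division by zero yields zero). -/
noncomputable def delta (G : WDigraph V) (s v : V) : ℝ :=
  ∑ᶠ t ∈ {t : V | t ≠ s ∧ t ≠ v}, (G.sigmaV s t v : ℝ) / (G.sigma s t : ℝ)

/-- `c_B(v)`: the betweenness centrality of `v`. -/
noncomputable def bc (G : WDigraph V) (v : V) : ℝ :=
  ∑ᶠ s ∈ {s : V | s ≠ v}, G.delta s v

/-- `G'` is obtained from `G` by the incremental update `(u, v, ω'(u,v))`: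
either a new edge `(u,v) ∉ E` is inserted with positive weight, or the weight
of the existing edge `(u,v)` is decreased; all other edges and weights are
unchanged. (Positivity of all weights is part of the `WDigraph` structure.) -/
structure IsUpdate (G G' : WDigraph V) (u v : V) : Prop where
  /-- the updated edge is present in `G'` -/
  edge' : G'.E u v
  /-- `E' = E ∪ {(u,v)}` -/
  edge_iff : ∀ a b, G'.E a b ↔ G.E a b ∨ a = u ∧ b = v
  /-- `ω'` agrees with `ω` on all edges other than `(u,v)` -/
  weight_eq : ∀ a b, ¬(a = u ∧ b = v) → G'.w a b = G.w a b
  /-- either an insertion of a new edge, or a weight decrease of an existing one -/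
  insert_or_decrease : ¬ G.E u v ∨ (G.E u v ∧ G'.w u v < G.w u v)

/-- `S(t)`: the affected sources of `t`. -/
def affS (G G' : WDigraph V) (t : V) : Set V :=
  {s | G.dist s t > G'.dist s t ∨ G.sigma s t ≠ G'.sigma s t}

/-- `T(s)`: the affected targets of `s`. -/
def affT (G G' : WDigraph V) (s : V) : Set V :=
  {t | G.dist s t > G'.dist s t ∨ G.sigma s t ≠ G'.sigma s t}

/-- `Δ_{s•}(v) = Σ_{t ∈ T(s), t ≠ v} σ_{st}(v)/σ_{st}`, computed in `G`
(`0`-convention for zero denominators). -/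
noncomputable def Delta (G G' : WDigraph V) (s v : V) : ℝ :=
  ∑ᶠ t ∈ {t : V | t ∈ affT G G' s ∧ t ≠ v}, (G.sigmaV s t v : ℝ) / (G.sigma s t : ℝ)

/-- `Δ'_{s•}(v) = Σ_{t ∈ T(s), t ≠ v} σ'_{st}(v)/σ'_{st}`, computed in `G'`
(`0`-convention for zero denominators). -/
noncomputable def Delta' (G G' : WDigraph V) (s v : V) : ℝ :=
  ∑ᶠ t ∈ {t : V | t ∈ affT G G' s ∧ t ≠ v}, (G'.sigmaV s t v : ℝ) / (G'.sigma s t : ℝ)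

end WDigraph

/-! An update only adds the edge `(u,v)` or makes it cheaper, so every shortest `s`-`t` path of `G`
is still a path of `G'`, and no more expensive there. If `t ∉ T(s)`, then `d(s,t) ≤ d'(s,t)`, hence
these paths remain shortest in `G'`; as `σ_{st} = σ'_{st}` they are all of them. So outside `T(s)`
the summands of `δ_{s•}(x)` and `δ'_{s•}(x)` agree, and the two dependencies differ only by the
terms over `T(s)`, which are `Δ_{s•}(x)` and `Δ'_{s•}(x)`. -/

namespace WDigraph

variable {V : Type*}

lemma setOf_isPath_finite [Fintype V] (G : WDigraph V) (s t : V) : {p | G.IsPath s t p}.Finite :=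
  (Set.finite_range (Subtype.val : {l : List V // l.Nodup} → List V)).subset
    fun p hp => ⟨⟨p, hp.2.2.2⟩, rfl⟩

lemma SP_finite [Fintype V] (G : WDigraph V) (s t : V) : (G.SP s t).Finite :=
  (setOf_isPath_finite G s t).subset fun _ hp => hp.1

lemma dist_le_pw {G : WDigraph V} {s t : V} {p : List V} (hp : G.IsPath s t p) :
    G.dist s t ≤ G.pw p :=
  sInf_le ⟨p, hp, rfl⟩

lemma isPath_self_iff {G : WDigraph V} {s : V} {p : List V} : G.IsPath s s p ↔ p = [s] := by
  refine ⟨fun ⟨_, hhead, hlast, hnodup⟩ => ?_, fun hp => hp ▸ ⟨List.isChain_singleton s, rfl, rfl,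
    List.nodup_singleton s⟩⟩
  obtain ⟨r, rfl⟩ : ∃ r, p = s :: r := by
    cases p with
    | nil => simp at hhead
    | cons a r => exact ⟨r, by simpa using hhead⟩
  cases r with
  | nil => rfl
  | cons b r =>
    have hs : s ∈ b :: r := by
      rw [List.getLast?_cons_cons] at hlast
      exact List.mem_of_getLast? hlast
    exact absurd hs (List.nodup_cons.1 hnodup).1

lemma dist_self (G : WDigraph V) (s : V) : G.dist s s = 0 := by
  have hpaths : {p | G.IsPath s s p} = {[s]} := Set.ext fun _ => isPath_self_iff
  rw [dist, hpaths, Set.image_singleton, sInf_singleton]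
  rfl

lemma sigma_self (G : WDigraph V) (s : V) : G.sigma s s = 1 := by
  have hSP : G.SP s s = {[s]} := by
    ext p
    simp only [SP, Set.mem_ofPred_eq, isPath_self_iff, dist_self, Set.mem_singleton_iff,
      and_iff_left_iff_imp]
    rintro rfl
    rfl
  rw [sigma, hSP, Set.ncard_singleton]

lemma self_notMem_affT (G G' : WDigraph V) (s : V) : s ∉ affT G G' s := by
  simp [affT, dist_self, sigma_self]

lemma delta_eq_add_finsum_diff [Fintype V] (G : WDigraph V) {T : Set V} {s : V} (hs : s ∉ T)
    (x : V) :
    G.delta s x = ∑ᶠ t ∈ {t : V | t ∈ T ∧ t ≠ x}, (G.sigmaV s t x : ℝ) / G.sigma s t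
      + ∑ᶠ t ∈ {t : V | t ≠ s ∧ t ≠ x} \ T, (G.sigmaV s t x : ℝ) / G.sigma s t := by
  have hinter : {t : V | t ≠ s ∧ t ≠ x} ∩ T = {t : V | t ∈ T ∧ t ≠ x} := by
    ext t
    simp only [Set.mem_inter_iff, Set.mem_ofPred_eq]
    exact ⟨fun ⟨⟨_, htx⟩, ht⟩ => ⟨ht, htx⟩,
      fun ⟨ht, htx⟩ => ⟨⟨fun hts => hs (hts ▸ ht), htx⟩, ht⟩⟩
  rw [delta, ← hinter]
  exact (finsum_mem_inter_add_sdiff T (Set.toFinite _)).symm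

namespace IsUpdate

variable {G G' : WDigraph V} {u v : V}

lemma weight_le (h : IsUpdate G G' u v) {a b : V} (hab : G.E a b) : G'.w a b ≤ G.w a b := by
  by_cases huv : a = u ∧ b = v
  · obtain ⟨rfl, rfl⟩ := huv
    rcases h.insert_or_decrease with hnew | ⟨_, hlt⟩
    · exact absurd hab hnew
    · exact hlt.le
  · exact (h.weight_eq a b huv).le

lemma pw_le (h : IsUpdate G G' u v) : ∀ {p : List V}, p.IsChain G.E → G'.pw p ≤ G.pw p
  | [], _ | [_], _ => le_rfl
  | a :: b :: r, hp => by
    rw [List.isChain_cons_cons] at hp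
    exact add_le_add (h.weight_le hp.1) (h.pw_le hp.2)

lemma isPath (h : IsUpdate G G' u v) {s t : V} {p : List V} (hp : G.IsPath s t p) :
    G'.IsPath s t p :=
  ⟨hp.1.imp fun a b hab => (h.edge_iff a b).2 (Or.inl hab), hp.2⟩

lemma SP_subset (h : IsUpdate G G' u v) {s t : V} (hd : G.dist s t ≤ G'.dist s t) :
    G.SP s t ⊆ G'.SP s t := by
  rintro p ⟨hp, hpw⟩
  refine ⟨h.isPath hp, le_antisymm ?_ (dist_le_pw (h.isPath hp))⟩
  calc (G'.pw p : EReal) ≤ G.pw p := EReal.coe_le_coe_iff.2 (h.pw_le hp.1)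
    _ = G.dist s t := hpw
    _ ≤ G'.dist s t := hd

lemma SP_eq_of_notMem_affT [Fintype V] (h : IsUpdate G G' u v) {s t : V}
    (ht : t ∉ affT G G' s) :
    G.SP s t = G'.SP s t := by
  simp only [affT, Set.mem_ofPred_eq, not_or, not_lt, not_not] at ht
  exact Set.eq_of_subset_of_ncard_le (h.SP_subset ht.1) ht.2.symm.le (SP_finite G' s t)

end IsUpdate

variable [Fintype V] [DecidableEq V]

theorem delta'_eq_general (G G' : WDigraph V) (u v : V)
    (h : IsUpdate G G' u v) (s x : V) :
    G'.delta s x = G.delta s x - Delta G G' s x + Delta' G G' s x := by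
  have hs := self_notMem_affT G G' s
  have hunaffected : ∑ᶠ t ∈ {t : V | t ≠ s ∧ t ≠ x} \ affT G G' s,
        (G'.sigmaV s t x : ℝ) / G'.sigma s t
      = ∑ᶠ t ∈ {t : V | t ≠ s ∧ t ≠ x} \ affT G G' s, (G.sigmaV s t x : ℝ) / G.sigma s t :=
    finsum_mem_congr rfl fun t ht => by
      rw [sigmaV, sigmaV, sigma, sigma, h.SP_eq_of_notMem_affT ht.2]
  rw [delta_eq_add_finsum_diff G' hs, delta_eq_add_finsum_diff G hs, hunaffected, Delta, Delta']
  ring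

/-- For every `s, x ∈ V` with `x ≠ s`, the dependency after the
update satisfies `δ'_{s•}(x) = δ_{s•}(x) − Δ_{s•}(x) + Δ'_{s•}(x)`. -/
theorem delta'_eq (G G' : WDigraph V) (u v : V)
    (h : IsUpdate G G' u v) (s x : V) (hxs : x ≠ s) :
    G'.delta s x = G.delta s x - Delta G G' s x + Delta' G G' s x :=
  delta'_eq_general G G' u v h s x

end WDigraph
end

section
/- (Brandes's dependency recursion.) For every s, v ∈ V with v ≠ s: δ_{s•}(v) = Σ_{w : v ∈ P_s(w)} (σ_{sv}/σ_{sw}) · (1 + δ_{s•}(w)). -/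
open scoped BigOperators

/-! Positive weights make every walk of weight `d(s,t)` a shortest path, so prefixes of shortest
paths are shortest and can be exchanged. A shortest `s`-`t` path through `x ≠ t` leaves `x` along
an edge `(x, w)` with `x ∈ P_s(w)`, and it is a shortest `s`-`x` path followed by the continuation
beyond `w` of some shortest `s`-`t` path through `w`. With `τ` the number of such continuations,
`σ_{st}(x,w) = σ_{sx} τ` and `σ_{st}(w) = σ_{sw} τ`, hence
`σ_{st}(x)/σ_{st} = Σ_w (σ_{sx}/σ_{sw}) σ_{st}(w)/σ_{st}`. Summing over `t` gives the recursion: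
the term `t = w` contributes the `1`, and the term `t = x` of `δ_{s•}(w)` vanishes because `w`
lies on no shortest `s`-`x` path. -/

namespace List

variable {α : Type*}

lemma exists_eq_append_cons_append_cons_of_not_nodup {l : List α} (h : ¬ l.Nodup) :
    ∃ a y b c, l = a ++ y :: (b ++ y :: c) := by
  obtain ⟨y, hy⟩ : ∃ y, [y, y] <+ l := by simpa [nodup_iff_sublist] using h
  obtain ⟨r₁, r₂, rfl, hy₁, hy₂⟩ := cons_sublist_iff.1 hy
  obtain ⟨a, b, rfl⟩ := append_of_mem hy₁
  obtain ⟨b', c, rfl⟩ := append_of_mem (singleton_sublist.1 hy₂)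
  exact ⟨a, y, b ++ b', c, by simp⟩

lemma Nodup.notMem_of_append_cons {l₁ l₂ : List α} {a : α} (h : (l₁ ++ a :: l₂).Nodup) :
    a ∉ l₁ ∧ a ∉ l₂ := by
  simpa [not_or] using (nodup_cons.1 (nodup_middle.1 h)).1

lemma Nodup.eq_of_infix_of_infix {l : List α} (hl : l.Nodup) {x y z : α}
    (hy : [x, y] <:+: l) (hz : [x, z] <:+: l) : y = z := by
  obtain ⟨u, v, rfl⟩ := hy
  obtain ⟨u', v', h⟩ := hz
  simp only [append_assoc, cons_append, nil_append] at hl h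
  obtain ⟨hu, hv⟩ := hl.notMem_of_append_cons
  exact (cons.inj ((append_cons_inj_of_notMem hu hv).1 h.symm).2.2).1

end List

lemma Set.ncard_image_append_cons_prod {α : Type*} {A B : Set (List α)} {w : α}
    (hA : ∀ a ∈ A, w ∉ a) (hB : ∀ b ∈ B, w ∉ b) :
    ((fun ab : List α × List α => ab.1 ++ w :: ab.2) '' (A ×ˢ B)).ncard = A.ncard * B.ncard := by
  rw [Set.InjOn.ncard_image, Set.ncard_prod]
  rintro ⟨a, b⟩ ⟨ha, hb⟩ ⟨a', b'⟩ - h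
  obtain ⟨rfl, -, rfl⟩ := (List.append_cons_inj_of_notMem (hA a ha) (hB b hb)).1 h
  rfl

namespace WDigraph

open List

variable {V : Type*} {G : WDigraph V} {s t w x y : V} {a b c p q r : List V}

@[simp] lemma pw_singleton : G.pw [x] = 0 := rfl

@[simp] lemma pw_cons_cons : G.pw (x :: y :: p) = G.w x y + G.pw (y :: p) := rfl

lemma pw_append_cons : ∀ (a : List V) (y : V) (b : List V),
    G.pw (a ++ y :: b) = G.pw (a ++ [y]) + G.pw (y :: b)
  | [], _, _ => by simp
  | [_], _, _ => by simp
  | x :: z :: a, y, b => by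
    change G.w x z + G.pw ((z :: a) ++ y :: b) = G.w x z + G.pw ((z :: a) ++ [y]) + G.pw (y :: b)
    rw [pw_append_cons (z :: a) y b, add_assoc]

lemma pw_nonneg : ∀ {p : List V}, p.IsChain G.E → 0 ≤ G.pw p
  | [], _ | [_], _ => le_rfl
  | _ :: _ :: _, h => by
    rw [isChain_cons_cons] at h
    exact add_nonneg (G.pos _ _ h.1).le (pw_nonneg h.2)

lemma pw_pos : ∀ {p : List V}, p.IsChain G.E → 2 ≤ p.length → 0 < G.pw p
  | _ :: _ :: _, h, _ => by
    rw [isChain_cons_cons] at h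
    exact add_pos_of_pos_of_nonneg (G.pos _ _ h.1) (pw_nonneg h.2)

def IsWalk (G : WDigraph V) (s t : V) (p : List V) : Prop :=
  p.IsChain G.E ∧ p.head? = some s ∧ p.getLast? = some t

lemma IsPath.isWalk (h : G.IsPath s t p) : G.IsWalk s t p := ⟨h.1, h.2.1, h.2.2.1⟩

lemma IsPath.nodup (h : G.IsPath s t p) : p.Nodup := h.2.2.2

lemma IsWalk.isPath (h : G.IsWalk s t p) (hp : p.Nodup) : G.IsPath s t p := ⟨h.1, h.2.1, h.2.2, hp⟩

lemma isWalk_append_cons :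
    G.IsWalk s t (a ++ y :: b) ↔ G.IsWalk s y (a ++ [y]) ∧ G.IsWalk y t (y :: b) := by
  simp only [IsWalk]
  rw [isChain_split]
  simp only [head?_append, getLast?_append, getLast?_cons, head?_cons, Option.or_some]
  tauto

lemma IsWalk.bypass_cycle (h : G.IsWalk s t (a ++ y :: (b ++ y :: c))) :
    G.IsWalk s t (a ++ y :: c) ∧ G.pw (a ++ y :: c) < G.pw (a ++ y :: (b ++ y :: c)) := by
  obtain ⟨hsy, hyt⟩ := isWalk_append_cons.1 h
  obtain ⟨hcycle, hyt'⟩ := isWalk_append_cons.1 (show G.IsWalk y t ((y :: b) ++ y :: c) from hyt)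
  refine ⟨isWalk_append_cons.2 ⟨hsy, hyt'⟩, ?_⟩
  have hpos : 0 < G.pw ((y :: b) ++ [y]) := pw_pos hcycle.1 (by simp)
  have hsplit : G.pw (y :: (b ++ y :: c)) = G.pw ((y :: b) ++ [y]) + G.pw (y :: c) :=
    pw_append_cons (y :: b) y c
  have hshort := pw_append_cons (G := G) a y c
  have hlong := pw_append_cons (G := G) a y (b ++ y :: c)
  linarith

lemma IsWalk.exists_isPath_pw_le (h : G.IsWalk s t p) :
    ∃ q, G.IsPath s t q ∧ G.pw q ≤ G.pw p := by
  induction hn : p.length using Nat.strong_induction_on generalizing p with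
  | _ n ih =>
  by_cases hp : p.Nodup
  · exact ⟨p, h.isPath hp, le_rfl⟩
  obtain ⟨a, y, b, c, rfl⟩ := exists_eq_append_cons_append_cons_of_not_nodup hp
  obtain ⟨q, hq, hle⟩ := ih _ (by simp [← hn]) h.bypass_cycle.1 rfl
  exact ⟨q, hq, hle.trans h.bypass_cycle.2.le⟩

lemma IsWalk.exists_isPath_pw_lt (h : G.IsWalk s t p) (hp : ¬ p.Nodup) :
    ∃ q, G.IsPath s t q ∧ G.pw q < G.pw p := by
  obtain ⟨a, y, b, c, rfl⟩ := exists_eq_append_cons_append_cons_of_not_nodup hp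
  obtain ⟨q, hq, hle⟩ := h.bypass_cycle.1.exists_isPath_pw_le
  exact ⟨q, hq, hle.trans_lt h.bypass_cycle.2⟩

lemma IsPath.dist_le (h : G.IsPath s t p) : G.dist s t ≤ G.pw p := sInf_le ⟨p, h, rfl⟩

lemma IsWalk.dist_le (h : G.IsWalk s t p) : G.dist s t ≤ G.pw p := by
  obtain ⟨q, hq, hle⟩ := h.exists_isPath_pw_le
  exact hq.dist_le.trans (EReal.coe_le_coe_iff.2 hle)

lemma IsWalk.mem_SP_of_pw_eq (h : G.IsWalk s t p) (hp : (G.pw p : EReal) = G.dist s t) :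
    p ∈ G.SP s t := by
  refine ⟨h.isPath ?_, hp⟩
  by_contra hnd
  obtain ⟨q, hq, hlt⟩ := h.exists_isPath_pw_lt hnd
  exact hq.dist_le.not_gt (hp ▸ EReal.coe_lt_coe_iff.2 hlt)

lemma pw_eq_of_mem_SP (hp : p ∈ G.SP s t) (hq : q ∈ G.SP s t) : G.pw p = G.pw q :=
  EReal.coe_injective (hp.2.trans hq.2.symm)

lemma append_singleton_mem_SP (hp : a ++ y :: b ∈ G.SP s t) : a ++ [y] ∈ G.SP s y := by
  obtain ⟨hsy, hyt⟩ := isWalk_append_cons.1 hp.1.isWalk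
  have hpath : G.IsPath s y (a ++ [y]) := hsy.isPath (hp.1.nodup.sublist (by simp))
  refine ⟨hpath, le_antisymm (not_lt.1 fun hlt => ?_) hpath.dist_le⟩
  obtain ⟨_, ⟨q, hq, rfl⟩, hqlt⟩ := sInf_lt_iff.1 hlt
  obtain ⟨q, rfl⟩ := getLast?_eq_some_iff.1 hq.2.2.1
  have hwalk : G.IsWalk s t (q ++ y :: b) := isWalk_append_cons.2 ⟨hq.isWalk, hyt⟩
  have hshorter : G.pw (q ++ y :: b) < G.pw (a ++ y :: b) := by
    rw [pw_append_cons q, pw_append_cons a]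
    exact add_lt_add_left (EReal.coe_lt_coe_iff.1 hqlt) _
  exact hwalk.dist_le.not_gt (hp.2 ▸ EReal.coe_lt_coe_iff.2 hshorter)

lemma append_cons_mem_SP (hp : a ++ w :: b ∈ G.SP s t) (hr : r ++ [w] ∈ G.SP s w) :
    r ++ w :: b ∈ G.SP s t := by
  have hwalk : G.IsWalk s t (r ++ w :: b) :=
    isWalk_append_cons.2 ⟨hr.1.isWalk, (isWalk_append_cons.1 hp.1.isWalk).2⟩
  refine hwalk.mem_SP_of_pw_eq ?_
  rw [pw_append_cons, pw_eq_of_mem_SP hr (append_singleton_mem_SP hp), ← pw_append_cons]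
  exact hp.2

lemma finite_setOf_isPath [Finite V] (G : WDigraph V) (s t : V) :
    {p | G.IsPath s t p}.Finite := by
  have := Fintype.ofFinite V
  exact (List.finite_length_le V (Fintype.card V)).subset fun p hp => hp.nodup.length_le_card

lemma finite_SP [Finite V] (G : WDigraph V) (s t : V) : (G.SP s t).Finite :=
  (finite_setOf_isPath G s t).subset fun _ hp => hp.1

lemma nonempty_SP [Finite V] (h : G.dist s t < ⊤) : (G.SP s t).Nonempty := by
  have hne : {p | G.IsPath s t p}.Nonempty := by
    by_contra hempty
    simp [dist, Set.not_nonempty_iff_eq_empty.1 hempty] at h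
  obtain ⟨p, hp, hpw⟩ := (hne.image fun p => (G.pw p : EReal)).csInf_mem
    ((finite_setOf_isPath G s t).image _)
  exact ⟨p, hp, hpw⟩

lemma sigma_ne_zero [Finite V] (h : G.dist s t < ⊤) : G.sigma s t ≠ 0 :=
  ((Set.ncard_pos (finite_SP G s t)).2 (nonempty_SP h)).ne'

lemma dist_lt_top_of_mem_pred (hx : x ∈ G.pred s w) : G.dist s x < ⊤ := by
  obtain ⟨-, hd, hlt⟩ := hx
  refine lt_top_iff_ne_top.2 fun htop => hlt.ne ?_
  rw [← hd, htop, EReal.top_add_coe]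

lemma append_singleton_mem_SP_of_mem_pred (hx : x ∈ G.pred s w) (hq : q ∈ G.SP s x) :
    q ++ [w] ∈ G.SP s w := by
  obtain ⟨a, rfl⟩ := getLast?_eq_some_iff.1 hq.1.2.2.1
  rw [append_assoc, singleton_append]
  have hxw : G.IsWalk x w [x, w] := ⟨isChain_pair.2 hx.1, rfl, rfl⟩
  refine (isWalk_append_cons.2 ⟨hq.1.isWalk, hxw⟩).mem_SP_of_pw_eq ?_
  rw [pw_append_cons, EReal.coe_add, hq.2, ← hx.2.1]
  simp

lemma notMem_of_mem_pred (hx : x ∈ G.pred s w) (hq : q ∈ G.SP s x) : w ∉ q := by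
  have hnd := (append_singleton_mem_SP_of_mem_pred hx hq).1.nodup
  exact (hnd.notMem_of_append_cons (l₂ := [])).1

lemma ne_source_of_mem_pred [Finite V] (hx : x ∈ G.pred s w) : w ≠ s := by
  obtain ⟨q, hq⟩ := nonempty_SP (dist_lt_top_of_mem_pred hx)
  rintro rfl
  exact notMem_of_mem_pred hx hq (mem_of_mem_head? hq.1.2.1)

lemma mem_pred_of_append_mem_SP (hp : a ++ x :: w :: b ∈ G.SP s t) : x ∈ G.pred s w := by
  have hx := append_singleton_mem_SP hp
  have hw : (a ++ [x]) ++ [w] ∈ G.SP s w := append_singleton_mem_SP (by simpa using hp)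
  refine ⟨(isChain_append_cons_cons.1 hp.1.1).2.1, ?_, hw.2 ▸ EReal.coe_lt_top _⟩
  rw [← hx.2, ← hw.2, append_assoc, singleton_append, pw_append_cons a x [w]]
  simp

def SPTails (G : WDigraph V) (s t w : V) : Set (List V) :=
  {b | ∃ a, a ++ w :: b ∈ G.SP s t}

lemma notMem_of_mem_SPTails (hb : b ∈ G.SPTails s t w) : w ∉ b := by
  obtain ⟨a, ha⟩ := hb
  exact ha.1.nodup.notMem_of_append_cons.2

lemma setOf_mem_SP_mem_eq_image : {p ∈ G.SP s t | w ∈ p} =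
    (fun ab : List V × List V => ab.1 ++ w :: ab.2) ''
      (((· ++ [w]) ⁻¹' G.SP s w) ×ˢ G.SPTails s t w) := by
  ext p
  constructor
  · rintro ⟨hp, hw⟩
    obtain ⟨a, b, rfl⟩ := append_of_mem hw
    exact ⟨(a, b), ⟨append_singleton_mem_SP hp, a, hp⟩, rfl⟩
  · rintro ⟨⟨a, b⟩, ⟨ha, a', hb⟩, rfl⟩
    exact ⟨append_cons_mem_SP hb ha, by simp⟩

lemma setOf_mem_SP_infix_eq_image (hx : x ∈ G.pred s w) : {p ∈ G.SP s t | [x, w] <:+: p} =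
    (fun ab : List V × List V => ab.1 ++ w :: ab.2) '' (G.SP s x ×ˢ G.SPTails s t w) := by
  ext p
  constructor
  · rintro ⟨hp, u, v, rfl⟩
    have hp' : u ++ x :: w :: v ∈ G.SP s t := by simpa using hp
    refine ⟨(u ++ [x], v), ⟨append_singleton_mem_SP hp', u ++ [x], by simpa using hp⟩, by simp⟩
  · rintro ⟨⟨q, b⟩, ⟨hq, a, hb⟩, rfl⟩
    refine ⟨append_cons_mem_SP hb (append_singleton_mem_SP_of_mem_pred hx hq), ?_⟩
    obtain ⟨q, rfl⟩ := getLast?_eq_some_iff.1 hq.1.2.2.1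
    exact ⟨q, b, by simp⟩

lemma sigmaV_eq_sigma_mul : G.sigmaV s t w = G.sigma s w * (G.SPTails s t w).ncard := by
  rw [sigmaV, setOf_mem_SP_mem_eq_image, Set.ncard_image_append_cons_prod, sigma,
    Set.ncard_preimage_of_injective_subset_range (append_left_injective [w])]
  · exact fun p hp => (getLast?_eq_some_iff.1 hp.1.2.2.1).imp fun _ h => h.symm
  · exact fun a ha => (ha.1.nodup.notMem_of_append_cons (l₂ := [])).1
  · exact fun b hb => notMem_of_mem_SPTails hb

lemma sigmaE_eq_sigma_mul (hx : x ∈ G.pred s w) :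
    G.sigmaE s t x w = G.sigma s x * (G.SPTails s t w).ncard := by
  rw [sigmaE, setOf_mem_SP_infix_eq_image hx, Set.ncard_image_append_cons_prod, sigma]
  · exact fun q hq => notMem_of_mem_pred hx hq
  · exact fun b hb => notMem_of_mem_SPTails hb

lemma sigmaE_mul_sigma (hx : x ∈ G.pred s w) :
    G.sigmaE s t x w * G.sigma s w = G.sigma s x * G.sigmaV s t w := by
  rw [sigmaE_eq_sigma_mul hx, sigmaV_eq_sigma_mul]
  ring

lemma setOf_mem_SP_mem_eq_biUnion (hxt : x ≠ t) : {p ∈ G.SP s t | x ∈ p} =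
    ⋃ w ∈ {w | x ∈ G.pred s w}, {p ∈ G.SP s t | [x, w] <:+: p} := by
  ext p
  simp only [Set.mem_sep_iff, Set.mem_iUnion, exists_prop]
  constructor
  · rintro ⟨hp, hx⟩
    obtain ⟨a, b, rfl⟩ := append_of_mem hx
    cases b with
    | nil => exact absurd (by simpa using hp.1.2.2.1) hxt
    | cons w b => exact ⟨w, mem_pred_of_append_mem_SP hp, hp, a, b, by simp⟩
  · rintro ⟨w, -, hp, hxw⟩
    exact ⟨hp, hxw.subset (by simp)⟩

lemma sigmaV_eq_finsum_sigmaE [Finite V] (hxt : x ≠ t) :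
    G.sigmaV s t x = ∑ᶠ w ∈ {w | x ∈ G.pred s w}, G.sigmaE s t x w := by
  rw [sigmaV, setOf_mem_SP_mem_eq_biUnion hxt, Set.Finite.ncard_biUnion (Set.toFinite _)]
  · rfl
  · exact fun w _ => (finite_SP G s t).subset fun _ hp => hp.1
  · exact fun w _ w' _ hne => Set.disjoint_left.2 fun p ⟨hp, h⟩ ⟨_, h'⟩ =>
      hne (hp.1.nodup.eq_of_infix_of_infix h h')

lemma sigmaV_self : G.sigmaV s t t = G.sigma s t := by
  rw [sigmaV, sigma]
  congr 1
  exact Set.sep_eq_self_iff_mem_true.2 fun p hp => mem_of_mem_getLast? hp.1.2.2.1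

lemma sigmaV_eq_zero_of_mem_pred (hx : x ∈ G.pred s w) : G.sigmaV s x w = 0 := by
  rw [sigmaV, Set.sep_eq_empty_iff_mem_false.2 fun q hq => notMem_of_mem_pred hx hq,
    Set.ncard_empty]

lemma finsum_sigmaV_div_sigma [Finite V] (hws : w ≠ s) (hw : G.sigma s w ≠ 0) :
    ∑ᶠ t ∈ {t | t ≠ s}, (G.sigmaV s t w : ℝ) / G.sigma s t = 1 + G.delta s w := by
  have hinsert : {t | t ≠ s} = insert w {t | t ≠ s ∧ t ≠ w} := by
    ext t
    by_cases t = w <;> simp_all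
  rw [hinsert, finsum_mem_insert _ (by simp) (Set.toFinite _), sigmaV_self,
    div_self (by exact_mod_cast hw)]
  rfl

lemma finsum_sigmaE_div_sigma [Finite V] (hx : x ∈ G.pred s w) :
    ∑ᶠ t ∈ {t | t ≠ s ∧ t ≠ x}, (G.sigmaE s t x w : ℝ) / G.sigma s t =
      G.sigma s x / G.sigma s w * (1 + G.delta s w) := by
  have hσ : (G.sigma s w : ℝ) ≠ 0 := by exact_mod_cast sigma_ne_zero hx.2.2
  have hterm : ∀ t, (G.sigmaE s t x w : ℝ) / G.sigma s t =
      G.sigma s x / G.sigma s w * (G.sigmaV s t w / G.sigma s t) := by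
    intro t
    have h : (G.sigmaE s t x w : ℝ) * G.sigma s w = G.sigma s x * G.sigmaV s t w := by
      exact_mod_cast sigmaE_mul_sigma hx
    rw [div_mul_div_comm, ← h, mul_comm (G.sigma s w : ℝ), mul_div_mul_right _ _ hσ]
  rw [finsum_mem_congr rfl fun t _ => hterm t, ← mul_finsum_mem,
    ← finsum_sigmaV_div_sigma (ne_source_of_mem_pred hx) (sigma_ne_zero hx.2.2)]
  congr 1
  apply finsum_mem_inter_support_eq
  ext t
  by_cases htx : t = x
  · simp [htx, sigmaV_eq_zero_of_mem_pred hx]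
  · simp [htx]

end WDigraph

namespace WDigraph

variable {V : Type*} [Fintype V] [DecidableEq V]

theorem delta_recursion_general (G : WDigraph V) (s x : V) :
    G.delta s x =
      ∑ᶠ w ∈ {w : V | x ∈ G.pred s w},
        (G.sigma s x : ℝ) / (G.sigma s w : ℝ) * (1 + G.delta s w) := by
  calc G.delta s x
      = ∑ᶠ t ∈ {t | t ≠ s ∧ t ≠ x}, ∑ᶠ w ∈ {w | x ∈ G.pred s w},
          (G.sigmaE s t x w : ℝ) / G.sigma s t :=
        finsum_mem_congr rfl fun t ht => by
          rw [sigmaV_eq_finsum_sigmaE (Ne.symm ht.2), Nat.cast_finsum_mem (Set.toFinite _),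
            div_eq_mul_inv, finsum_mem_mul]
          simp only [div_eq_mul_inv]
    _ = ∑ᶠ w ∈ {w | x ∈ G.pred s w}, ∑ᶠ t ∈ {t | t ≠ s ∧ t ≠ x},
          (G.sigmaE s t x w : ℝ) / G.sigma s t :=
        finsum_mem_comm _ (Set.toFinite _) (Set.toFinite _)
    _ = _ := finsum_mem_congr rfl fun w hw => finsum_sigmaE_div_sigma hw

/-- **Brandes's dependency recursion.** For every `s, x ∈ V` with
`x ≠ s`: `δ_{s•}(x) = Σ_{w : x ∈ P_s(w)} (σ_{sx}/σ_{sw}) · (1 + δ_{s•}(w))`. -/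
theorem delta_recursion (G : WDigraph V) (s x : V) (hxs : x ≠ s) :
    G.delta s x =
      ∑ᶠ w ∈ {w : V | x ∈ G.pred s w},
        (G.sigma s x : ℝ) / (G.sigma s w : ℝ) * (1 + G.delta s w) :=
  delta_recursion_general G s x

end WDigraph
end
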